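/- arXiv:2210.17353 — 3 statements merged into one kernel-verified Lean document; each statement's English description precedes it below -/
import Mathlib

section
/- Let μ₀ ∈ ℝ, σ₀ > 0, δ ∈ ℝ, v ∈ ℝ. On a probability space, let X be a random variable with law N(μ₀,σ₀²), and let (M, Σ) be a pair of real random variables with Σ > 0 almost surely and δσ₀² + (1 − δ)Σ² > 0 almost surely, such that (M, Σ) is independent of X. Define the random DAS-CUSUM increment s = −δ(X − M)²/(2Σ²) + δ(X − μ₀)²/(2σ₀²) + δ(σ₀² + (μ₀ − M)²)/(2Σ²) − δ/2 − δv, and define g(m, t) = (1/2)·log( t / (δσ₀² + (1 − δ)t) ) + δσ₀²/(2t) + ((μ₀ − m)²/2)·( δ/t − (1 − δ)δ/((1 − δ)t + δσ₀²) ) for t > 0 with δσ₀² + (1−δ)t > 0. Then, as an identity in [0, ∞] (both sides may be infinite), E[ exp(s) ] = exp( δ(−1/2 − v) ) · E[ exp( g(M, Σ²) ) ]. -/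
/-!
By independence the law of `((M, Sig), X)` is a product, so Tonelli integrates out `X` for fixed
`(M, Sig) = (m, sig)`. Against the density of `N(μ₀,σ₀²)` the exponent of the increment is a
quadratic in `x` with leading coefficient `-(δσ₀² + (1 - δ)sig²)/(2 sig² σ₀²) < 0`; completing the
square evaluates the Gaussian integral, and the result is `exp (g (m, sig²))`.
-/

open MeasureTheory

/-- The Gaussian probability density `f_{μ,σ²}(x) = (2πσ²)^{−1/2} exp(−(x−μ)²/(2σ²))`. -/
noncomputable def gaussPdf (μ σ x : ℝ) : ℝ :=
  (Real.sqrt (2 * Real.pi * σ ^ 2))⁻¹ * Real.exp (-(x - μ) ^ 2 / (2 * σ ^ 2))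

/-- The Gaussian probability measure `N(μ,σ²)` on `ℝ`. -/
noncomputable def gaussMeasure (μ σ : ℝ) : Measure ℝ :=
  volume.withDensity (fun x => ENNReal.ofReal (gaussPdf μ σ x))

open Real ENNReal ProbabilityTheory

lemma exp_neg_mul_sq_add_mul_add {a : ℝ} (ha : a ≠ 0) (b c x : ℝ) :
    rexp (-a * x ^ 2 + b * x + c)
      = rexp (-a * (x - b / (2 * a)) ^ 2) * rexp (c + b ^ 2 / (4 * a)) := by
  rw [← Real.exp_add]
  congr 1
  field_simp
  ring

lemma integrable_exp_neg_mul_sq_add_mul_add {a : ℝ} (ha : 0 < a) (b c : ℝ) :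
    Integrable fun x : ℝ => rexp (-a * x ^ 2 + b * x + c) := by
  simp_rw [exp_neg_mul_sq_add_mul_add ha.ne']
  exact ((integrable_exp_neg_mul_sq ha).comp_sub_right _).mul_const _

lemma integral_exp_neg_mul_sq_add_mul_add {a : ℝ} (ha : 0 < a) (b c : ℝ) :
    ∫ x : ℝ, rexp (-a * x ^ 2 + b * x + c) = √(π / a) * rexp (c + b ^ 2 / (4 * a)) := by
  simp_rw [exp_neg_mul_sq_add_mul_add ha.ne']
  rw [integral_mul_const, integral_sub_right_eq_self (fun x => rexp (-a * x ^ 2)),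
    integral_gaussian]

lemma sqrt_inv_eq_exp_half_mul_log_inv {x : ℝ} (hx : 0 < x) :
    (√x)⁻¹ = rexp (1 / 2 * Real.log x⁻¹) := by
  rw [← Real.sqrt_inv, Real.sqrt_eq_rpow, Real.rpow_def_of_pos (inv_pos.mpr hx), mul_comm]

lemma lintegral_gaussMeasure_ofReal_exp_quadratic (μ : ℝ) {σ p : ℝ} (hσ : σ ≠ 0)
    (hp : 2 * p * σ ^ 2 < 1) (q r : ℝ) :
    ∫⁻ x, ENNReal.ofReal (rexp (p * x ^ 2 + q * x + r)) ∂gaussMeasure μ σ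
      = ENNReal.ofReal ((√(1 - 2 * p * σ ^ 2))⁻¹
          * rexp (r + ((q * σ ^ 2 + μ) ^ 2 / (1 - 2 * p * σ ^ 2) - μ ^ 2) / (2 * σ ^ 2))) := by
  have hd : 0 < 1 - 2 * p * σ ^ 2 := by linarith
  set a := (1 - 2 * p * σ ^ 2) / (2 * σ ^ 2)
  have ha : 0 < a := by positivity
  set b := q + μ / σ ^ 2
  set c := r - μ ^ 2 / (2 * σ ^ 2)
  have hdensity : ∀ x, gaussPdf μ σ x * rexp (p * x ^ 2 + q * x + r)
      = (√(2 * π * σ ^ 2))⁻¹ * rexp (-a * x ^ 2 + b * x + c) := by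
    intro x
    rw [gaussPdf, mul_assoc, ← Real.exp_add]
    congr 2
    simp only [a, b, c]
    field_simp
    ring
  have hpdf_nonneg : ∀ x, 0 ≤ gaussPdf μ σ x := fun x => by unfold gaussPdf; positivity
  calc ∫⁻ x, ENNReal.ofReal (rexp (p * x ^ 2 + q * x + r)) ∂gaussMeasure μ σ
      = ∫⁻ x, ENNReal.ofReal ((√(2 * π * σ ^ 2))⁻¹ * rexp (-a * x ^ 2 + b * x + c)) := by
        rw [gaussMeasure, lintegral_withDensity_eq_lintegral_mul _
          (by unfold gaussPdf; fun_prop) (by fun_prop)]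
        simp_rw [Pi.mul_apply, ← ENNReal.ofReal_mul (hpdf_nonneg _), hdensity]
    _ = ENNReal.ofReal ((√(2 * π * σ ^ 2))⁻¹ * (√(π / a) * rexp (c + b ^ 2 / (4 * a)))) := by
        rw [← ofReal_integral_eq_lintegral_ofReal
          ((integrable_exp_neg_mul_sq_add_mul_add ha b c).const_mul _)
          (Filter.Eventually.of_forall fun x => by positivity),
          integral_const_mul, integral_exp_neg_mul_sq_add_mul_add ha]
    _ = _ := by
        rw [← mul_assoc, inv_mul_eq_div, ← Real.sqrt_div (by positivity), ← Real.sqrt_inv]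
        have := hd.ne'
        congr 3
        · simp only [a]
          field_simp
        · simp only [a, b, c]
          field_simp
          ring

/-- `dasTilt μ₀ σ₀ δ m sig x = δ (log (f_{m,sig²}(x) / f_{μ₀,σ₀²}(x)) + KL(N(μ₀,σ₀²) ‖ N(m,sig²)) + 1/2)`:
the `log (sig/σ₀)` terms of the log-likelihood ratio and of the divergence cancel. -/
noncomputable def dasTilt (μ₀ σ₀ δ m sig x : ℝ) : ℝ :=
  -(δ * (x - m) ^ 2) / (2 * sig ^ 2) + δ * (x - μ₀) ^ 2 / (2 * σ₀ ^ 2)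
    + δ * (σ₀ ^ 2 + (μ₀ - m) ^ 2) / (2 * sig ^ 2)

noncomputable def dasTiltLogMgf (μ₀ σ₀ δ m sig : ℝ) : ℝ :=
  (1 / 2) * Real.log (sig ^ 2 / (δ * σ₀ ^ 2 + (1 - δ) * sig ^ 2)) + δ * σ₀ ^ 2 / (2 * sig ^ 2)
    + (μ₀ - m) ^ 2 / 2 * (δ / sig ^ 2 - (1 - δ) * δ / ((1 - δ) * sig ^ 2 + δ * σ₀ ^ 2))

lemma lintegral_gaussMeasure_ofReal_exp_dasTilt {μ₀ σ₀ δ : ℝ} (m : ℝ) {sig : ℝ}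
    (hσ₀ : σ₀ ≠ 0) (hsig : sig ≠ 0) (hz : 0 < δ * σ₀ ^ 2 + (1 - δ) * sig ^ 2) :
    ∫⁻ x, ENNReal.ofReal (rexp (dasTilt μ₀ σ₀ δ m sig x)) ∂gaussMeasure μ₀ σ₀
      = ENNReal.ofReal (rexp (dasTiltLogMgf μ₀ σ₀ δ m sig)) := by
  rw [dasTiltLogMgf]
  set t := sig ^ 2
  set z := δ * σ₀ ^ 2 + (1 - δ) * t
  have ht : 0 < t := by positivity
  set p := δ / (2 * σ₀ ^ 2) - δ / (2 * t)
  set q := δ * m / t - δ * μ₀ / σ₀ ^ 2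
  set r := δ * (σ₀ ^ 2 + (μ₀ - m) ^ 2 - m ^ 2) / (2 * t) + δ * μ₀ ^ 2 / (2 * σ₀ ^ 2)
  have hquadratic : ∀ x, dasTilt μ₀ σ₀ δ m sig x = p * x ^ 2 + q * x + r := by
    intro x
    simp only [dasTilt, p, q, r]
    field_simp
    ring
  have hpz : 1 - 2 * p * σ₀ ^ 2 = z / t := by
    simp only [p, z]
    field_simp
    ring
  simp_rw [hquadratic]
  rw [lintegral_gaussMeasure_ofReal_exp_quadratic μ₀ hσ₀ (by linarith [div_pos hz ht]) q r, hpz,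
    sqrt_inv_eq_exp_half_mul_log_inv (div_pos hz ht), inv_div, ← Real.exp_add]
  congr 2
  rw [show (1 - δ) * t + δ * σ₀ ^ 2 = z by ring]
  simp only [q, r]
  field_simp
  simp only [z]
  ring

theorem ProbabilityTheory.IndepFun.lintegral_comp_eq_lintegral_lintegral_map
    {Ω α β : Type*} [MeasurableSpace Ω] [MeasurableSpace α] [MeasurableSpace β]
    {P : Measure Ω} [IsFiniteMeasure P] {Y : Ω → β} {X : Ω → α} (hYX : IndepFun Y X P)
    (hY : Measurable Y) (hX : Measurable X) {F : β × α → ℝ≥0∞} (hF : Measurable F) :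
    ∫⁻ ω, F (Y ω, X ω) ∂P = ∫⁻ ω, ∫⁻ x, F (Y ω, x) ∂P.map X ∂P :=
  calc ∫⁻ ω, F (Y ω, X ω) ∂P = ∫⁻ z, F z ∂P.map fun ω => (Y ω, X ω) :=
        (lintegral_map hF (hY.prodMk hX)).symm
    _ = ∫⁻ y, ∫⁻ x, F (y, x) ∂P.map X ∂P.map Y := by
        rw [hYX.map_prod_eq_prod_map_map hY.aemeasurable hX.aemeasurable,
          lintegral_prod _ hF.aemeasurable]
    _ = ∫⁻ ω, ∫⁻ x, F (Y ω, x) ∂P.map X ∂P := lintegral_map hF.lintegral_prod_right' hY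

/-- for `X ∼ N(μ₀,σ₀²)` independent of `(M, Sig)` with `Sig > 0` a.s. and
`δσ₀² + (1−δ)Sig² > 0` a.s., the tilted DAS-CUSUM increment satisfies, in `[0,∞]`,
`E[exp(s)] = exp(δ(−1/2 − v)) · E[exp(g(M, Sig²))]`. -/
theorem stmt_6 {Ω : Type*} [MeasurableSpace Ω] (P : Measure Ω) [IsProbabilityMeasure P]
    (μ₀ σ₀ δ v : ℝ) (hσ₀ : 0 < σ₀)
    (X M Sig : Ω → ℝ)
    (hX : Measurable X) (hM : Measurable M) (hSig : Measurable Sig)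
    (hlaw : Measure.map X P = gaussMeasure μ₀ σ₀)
    (hSigpos : ∀ᵐ ω ∂P, 0 < Sig ω)
    (hzpos : ∀ᵐ ω ∂P, 0 < δ * σ₀ ^ 2 + (1 - δ) * Sig ω ^ 2)
    (hindep : ProbabilityTheory.IndepFun (fun ω => (M ω, Sig ω)) X P) :
    ∫⁻ ω, ENNReal.ofReal (Real.exp
        (-(δ * (X ω - M ω) ^ 2) / (2 * Sig ω ^ 2)
          + δ * (X ω - μ₀) ^ 2 / (2 * σ₀ ^ 2)
          + δ * (σ₀ ^ 2 + (μ₀ - M ω) ^ 2) / (2 * Sig ω ^ 2)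
          - δ / 2 - δ * v)) ∂P
      = ENNReal.ofReal (Real.exp (δ * (-1 / 2 - v)))
        * ∫⁻ ω, ENNReal.ofReal (Real.exp
            ((1 / 2) * Real.log (Sig ω ^ 2 / (δ * σ₀ ^ 2 + (1 - δ) * Sig ω ^ 2))
              + δ * σ₀ ^ 2 / (2 * Sig ω ^ 2)
              + (μ₀ - M ω) ^ 2 / 2
                * (δ / Sig ω ^ 2
                    - (1 - δ) * δ / ((1 - δ) * Sig ω ^ 2 + δ * σ₀ ^ 2)))) ∂P := by
  calc _ = ∫⁻ ω, ENNReal.ofReal (rexp (δ * (-1 / 2 - v)))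
          * ENNReal.ofReal (rexp (dasTilt μ₀ σ₀ δ (M ω) (Sig ω) (X ω))) ∂P := by
        refine lintegral_congr fun ω => ?_
        rw [← ENNReal.ofReal_mul (exp_nonneg _), ← Real.exp_add, dasTilt]
        ring_nf
    _ = ENNReal.ofReal (rexp (δ * (-1 / 2 - v))) * ∫⁻ ω, ∫⁻ x,
          ENNReal.ofReal (rexp (dasTilt μ₀ σ₀ δ (M ω) (Sig ω) x)) ∂gaussMeasure μ₀ σ₀ ∂P := by
        rw [lintegral_const_mul' _ _ ofReal_ne_top, ← hlaw,
          hindep.lintegral_comp_eq_lintegral_lintegral_map (hM.prodMk hSig) hX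
            (F := fun p => ENNReal.ofReal (rexp (dasTilt μ₀ σ₀ δ p.1.1 p.1.2 p.2)))
            (by unfold dasTilt; fun_prop)]
    _ = ENNReal.ofReal (rexp (δ * (-1 / 2 - v)))
          * ∫⁻ ω, ENNReal.ofReal (rexp (dasTiltLogMgf μ₀ σ₀ δ (M ω) (Sig ω))) ∂P := by
        congr 1
        refine lintegral_congr_ae ?_
        filter_upwards [hSigpos, hzpos] with ω hSigω hzω
        exact lintegral_gaussMeasure_ofReal_exp_dasTilt _ hσ₀.ne' hSigω.ne' hzω
end

section
/- Let s > 0 and w > 0, set δ* = −1/s + √(1/s² + w) and t = √(1 + s²w) − 1 (so t > 0). Then the maximal value of h(δ) = δ·s + log(1 − δ²/w) at δ = δ* equals h(δ*) = t − log((t + 2)/2) = √(1 + s²w) − 1 − log( (√(1 + s²w) + 1)/2 ), and this value is strictly positive. -/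
/-- `h(δ) = δ·s + log(1 − δ²/w)`, the denominator of the expected-detection-delay formula. -/
noncomputable def hFun (s w δ : ℝ) : ℝ := δ * s + Real.log (1 - δ ^ 2 / w)

/-- The optimal tilting parameter `δ* = −1/s + √(1/s² + w)`. -/
noncomputable def δstar (s w : ℝ) : ℝ := -1 / s + Real.sqrt (1 / s ^ 2 + w)

/-- with `t = √(1 + s²w) − 1 > 0`, the maximal value is
`h(δ*) = t − log((t + 2)/2) = √(1 + s²w) − 1 − log((√(1 + s²w) + 1)/2) > 0`. -/
theorem stmt_11 (s w : ℝ) (hs : 0 < s) (hw : 0 < w) :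
    0 < Real.sqrt (1 + s ^ 2 * w) - 1 ∧
    hFun s w (δstar s w)
      = (Real.sqrt (1 + s ^ 2 * w) - 1)
        - Real.log (((Real.sqrt (1 + s ^ 2 * w) - 1) + 2) / 2) ∧
    hFun s w (δstar s w)
      = Real.sqrt (1 + s ^ 2 * w) - 1
        - Real.log ((Real.sqrt (1 + s ^ 2 * w) + 1) / 2) ∧
    0 < hFun s w (δstar s w) := by
  set r := Real.sqrt (1 + s ^ 2 * w) with hrdef
  have h1 : (0:ℝ) < 1 + s ^ 2 * w := by positivity
  have hr2 : r ^ 2 = 1 + s ^ 2 * w := Real.sq_sqrt h1.le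
  have hrnn : 0 ≤ r := Real.sqrt_nonneg _
  have hr1 : 1 < r := by nlinarith [mul_pos (pow_pos hs 2) hw]
  have hsne : s ≠ 0 := hs.ne'
  have hδ : δstar s w = (r - 1) / s := by
    unfold δstar
    have h2 : 1 / s ^ 2 + w = (1 + s ^ 2 * w) / s ^ 2 := by field_simp
    rw [h2, Real.sqrt_div h1.le, Real.sqrt_sq hs.le]
    rw [← hrdef]
    field_simp
    ring
  have harg : 1 - (δstar s w) ^ 2 / w = 2 / (r + 1) := by
    rw [hδ]
    have hrp : r + 1 ≠ 0 := by linarith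
    field_simp
    nlinarith [hr2]

  have hval : hFun s w (δstar s w) = (r - 1) - Real.log ((r + 1) / 2) := by
    unfold hFun
    rw [harg, hδ]
    rw [div_mul_cancel₀ _ hsne]
    rw [Real.log_div (by norm_num) (by linarith), Real.log_div (by linarith) (by norm_num)]
    ring
  have hpos : 0 < hFun s w (δstar s w) := by
    rw [hval]
    have hlog : Real.log ((r + 1) / 2) < (r + 1) / 2 - 1 :=
      Real.log_lt_sub_one_of_pos (by linarith) (by intro h; nlinarith [h])
    linarith
  refine ⟨by linarith, ?_, ?_, hpos⟩ <;> rw [hval] <;> ring_nf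
end

section
/- Let s > 0 and w > 0, and set δ* = −1/s + √(1/s² + w). Then the optimal drift term v* = −log(1 − (δ*)²/w)/δ* satisfies v* > 0, and explicitly v* = s · log( (√(1 + s²w) + 1)/2 ) / ( √(1 + s²w) − 1 ). -/
/-- the optimal drift `v* = −log(1 − (δ*)²/w)/δ*` is strictly positive and
equals `s·log((√(1 + s²w) + 1)/2)/(√(1 + s²w) − 1)`. -/
theorem stmt_12 (s w : ℝ) (hs : 0 < s) (hw : 0 < w) :
    0 < -Real.log (1 - (δstar s w) ^ 2 / w) / δstar s w ∧
    -Real.log (1 - (δstar s w) ^ 2 / w) / δstar s w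
      = s * Real.log ((Real.sqrt (1 + s ^ 2 * w) + 1) / 2)
          / (Real.sqrt (1 + s ^ 2 * w) - 1) := by
  set r := Real.sqrt (1 + s ^ 2 * w) with hr
  have hr0 : 0 ≤ r := Real.sqrt_nonneg _
  have hr2 : r ^ 2 = 1 + s ^ 2 * w := Real.sq_sqrt (by positivity)
  have hr1 : 1 < r := by nlinarith [sq_nonneg (r - 1), sq_nonneg s, mul_pos (mul_pos hs hs) hw]
  have hδ : δstar s w = (r - 1) / s := by
    have hsq : Real.sqrt (1 / s ^ 2 + w) = r / s := by
      rw [show 1 / s ^ 2 + w = (r / s) ^ 2 by field_simp; linarith [hr2]]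
      exact Real.sqrt_sq (by positivity)
    rw [δstar, hsq]; ring
  have hδpos : 0 < δstar s w := by rw [hδ]; exact div_pos (by linarith) hs
  have h1 : 1 - (δstar s w) ^ 2 / w = 2 / (r + 1) := by
    rw [hδ]
    field_simp
    nlinarith [hr2]
  have hlog : -Real.log (1 - (δstar s w) ^ 2 / w) = Real.log ((r + 1) / 2) := by
    rw [h1, Real.log_div (by norm_num) (by positivity), Real.log_div (by positivity) (by norm_num)]
    ring
  have hlogpos : 0 < Real.log ((r + 1) / 2) := Real.log_pos (by linarith)
  constructor
  · rw [hlog]; positivity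
  · rw [hlog, hδ]
    field_simp
end
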